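/- Let λ > 1 and q ∈ ℕ with q ≥ 1, set f(t) = arcsin(λ^t/√(1+λ^{2t})) − arcsin(1/√(1+λ^{2t})), and for κ ≥ 1 put π(κ) = (2·f(κq) − f((κ−1)q) − f((κ+1)q))/f(q). Then lim_{κ→∞} π(κ+1)/π(κ) = λ^{−q}. -/

import Mathlib

open Filter Topology

noncomputable section

/-- `f(t) = arcsin(λ^t/√(1+λ^{2t})) − arcsin(1/√(1+λ^{2t}))`. -/
def fArc (lam : ℝ) (t : ℕ) : ℝ :=
  Real.arcsin (lam ^ t / Real.sqrt (1 + lam ^ (2 * t))) -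
    Real.arcsin (1 / Real.sqrt (1 + lam ^ (2 * t)))

/-- The multiplicity distribution of the limiting compound Poisson process at a
periodic point of prime period `q`, for the Euclidean metric. -/
def multDist (lam : ℝ) (q κ : ℕ) : ℝ :=
  (2 * fArc lam (κ * q) - fArc lam ((κ - 1) * q) - fArc lam ((κ + 1) * q)) /
    fArc lam q

/-!
Since `arcsin (y / √(1 + y²)) = arctan y`, one has `f(t) = π/2 - 2 arctan (λ^{-t})`. With
`ρ = λ^{-q}` and `x = ρ^κ`, the numerator of `π(κ)` (`κ ≥ 1`) is therefore
`g(x) = 2 arctan (x/ρ) + 2 arctan (ρx) - 4 arctan x`, a smooth function with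
`g'(0) = 2(1 - ρ)²/ρ ≠ 0`. Hence `g(x) ~ g'(0) x` as `x → 0`, and
`π(κ+1)/π(κ) = g(ρ^{κ+1})/g(ρ^κ) → ρ`.
-/

open Real

namespace Real

theorem arcsin_one_div_sqrt_one_add_sq {y : ℝ} (hy : 0 < y) :
    arcsin (1 / √(1 + y ^ 2)) = arctan y⁻¹ := by
  have hsqrt : √(1 + y⁻¹ ^ 2) = √(1 + y ^ 2) / y := by
    rw [show 1 + y⁻¹ ^ 2 = (1 + y ^ 2) / y ^ 2 by field_simp; ring,
      sqrt_div' _ (sq_nonneg y), sqrt_sq hy.le]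
  rw [arctan_eq_arcsin, hsqrt]
  congr 1
  field_simp

end Real

theorem fArc_eq_pi_div_two_sub {lam : ℝ} (hlam : 0 < lam) (t : ℕ) :
    fArc lam t = π / 2 - 2 * arctan (lam ^ t)⁻¹ := by
  have hpos : 0 < lam ^ t := pow_pos hlam t
  rw [fArc, mul_comm 2 t, pow_mul, ← arctan_eq_arcsin, arcsin_one_div_sqrt_one_add_sq hpos,
    arctan_inv_of_pos hpos]
  ring

theorem fArc_pos {lam : ℝ} (hlam : 1 < lam) {t : ℕ} (ht : t ≠ 0) : 0 < fArc lam t := by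
  have hlt : arctan (lam ^ t)⁻¹ < π / 4 := by
    rw [← arctan_one]
    exact arctan_strictMono (inv_lt_one_of_one_lt₀ (one_lt_pow₀ hlam ht))
  rw [fArc_eq_pi_div_two_sub (by linarith)]
  linarith

def arctanSecondDiff (ρ x : ℝ) : ℝ :=
  2 * arctan (ρ⁻¹ * x) + 2 * arctan (ρ * x) - 4 * arctan x

theorem hasDerivAt_arctanSecondDiff_zero (ρ : ℝ) :
    HasDerivAt (arctanSecondDiff ρ) (2 * ρ⁻¹ + 2 * ρ - 4) 0 := by
  have hlin : ∀ a : ℝ, HasDerivAt (fun x => arctan (a * x)) a 0 := fun a => by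
    simpa using (hasDerivAt_id (0 : ℝ)).const_mul a |>.arctan
  have harctan : HasDerivAt arctan 1 0 := by simpa using hasDerivAt_arctan 0
  exact ((((hlin ρ⁻¹).const_mul 2).add ((hlin ρ).const_mul 2)).sub
    (harctan.const_mul 4)).congr_deriv (by ring)

theorem tendsto_arctanSecondDiff_div_self (ρ : ℝ) :
    Tendsto (fun x => arctanSecondDiff ρ x / x) (𝓝[≠] 0) (𝓝 (2 * ρ⁻¹ + 2 * ρ - 4)) := by
  refine (hasDerivAt_arctanSecondDiff_zero ρ).tendsto_slope_zero.congr fun x => ?_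
  simp [arctanSecondDiff, div_eq_inv_mul]

theorem tendsto_div_comp_pow_of_tendsto_div_self {g : ℝ → ℝ} {c ρ : ℝ}
    (hg : Tendsto (fun x => g x / x) (𝓝[≠] 0) (𝓝 c)) (hc : c ≠ 0) (hρ : ρ ≠ 0)
    (hρ1 : |ρ| < 1) :
    Tendsto (fun κ : ℕ => g (ρ ^ (κ + 1)) / g (ρ ^ κ)) atTop (𝓝 ρ) := by
  have hpow : Tendsto (ρ ^ ·) atTop (𝓝[≠] (0 : ℝ)) :=
    tendsto_nhdsWithin_of_tendsto_nhds_of_eventually_within _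
      (tendsto_pow_atTop_nhds_zero_of_abs_lt_one hρ1)
      (Eventually.of_forall fun κ => pow_ne_zero κ hρ)
  have hslope := hg.comp hpow
  have hlim := ((hslope.comp (tendsto_add_atTop_nat 1)).div hslope hc).mul_const ρ
  rw [div_self hc, one_mul] at hlim
  refine hlim.congr fun κ => ?_
  have hρκ : ρ ^ κ ≠ 0 := pow_ne_zero κ hρ
  rcases eq_or_ne (g (ρ ^ κ)) 0 with h0 | h0
  · simp [Function.comp_def, h0]
  · simp only [Pi.div_apply, Function.comp_apply, pow_succ]
    field_simp

theorem multDist_eq_arctanSecondDiff {lam : ℝ} (hlam : 0 < lam) (q : ℕ) {κ : ℕ} (hκ : 1 ≤ κ) :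
    multDist lam q κ =
      arctanSecondDiff (lam ^ q)⁻¹ ((lam ^ q)⁻¹ ^ κ) / fArc lam q := by
  obtain ⟨j, rfl⟩ : ∃ j, κ = j + 1 := ⟨κ - 1, by omega⟩
  set ρ := (lam ^ q)⁻¹
  have hρ : ρ ≠ 0 := inv_ne_zero (pow_ne_zero q hlam.ne')
  have hinv : ∀ m : ℕ, (lam ^ (m * q))⁻¹ = ρ ^ m := fun m => by
    rw [mul_comm, pow_mul, inv_pow]
  have hprev : ρ⁻¹ * ρ ^ (j + 1) = ρ ^ j := by rw [pow_succ', inv_mul_cancel_left₀ hρ]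
  rw [multDist, Nat.add_sub_cancel, fArc_eq_pi_div_two_sub hlam, fArc_eq_pi_div_two_sub hlam,
    fArc_eq_pi_div_two_sub hlam, hinv, hinv, hinv, arctanSecondDiff, hprev, pow_succ' ρ (j + 1)]
  ring

/-- the multiplicity distribution `π` has geometric tail ratio:
`π(κ+1)/π(κ) → λ^{-q}` as `κ → ∞`. -/
theorem multDist_tail_ratio
    (lam : ℝ) (hlam : 1 < lam) (q : ℕ) (hq : 1 ≤ q) :
    Tendsto (fun κ : ℕ => multDist lam q (κ + 1) / multDist lam q κ) atTop
      (𝓝 ((lam ^ q)⁻¹)) := by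
  have hq0 : q ≠ 0 := by omega
  set ρ := (lam ^ q)⁻¹
  have hρ0 : 0 < ρ := inv_pos.mpr (pow_pos (by linarith) q)
  have hρ1 : ρ < 1 := inv_lt_one_of_one_lt₀ (one_lt_pow₀ hlam hq0)
  have hderiv : 2 * ρ⁻¹ + 2 * ρ - 4 ≠ 0 := by
    have : 2 * ρ⁻¹ + 2 * ρ - 4 = 2 * (1 - ρ) ^ 2 / ρ := by field_simp; ring
    rw [this]
    exact div_ne_zero (mul_ne_zero two_ne_zero (pow_ne_zero 2 (sub_ne_zero.mpr hρ1.ne'))) hρ0.ne'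
  refine (tendsto_div_comp_pow_of_tendsto_div_self (tendsto_arctanSecondDiff_div_self ρ) hderiv
    hρ0.ne' (by rwa [abs_of_pos hρ0])).congr' ?_
  filter_upwards [eventually_ge_atTop 1] with κ hκ
  rw [multDist_eq_arctanSecondDiff (by linarith) q hκ,
    multDist_eq_arctanSecondDiff (by linarith) q (by omega),
    div_div_div_cancel_right₀ (fArc_pos hlam hq0).ne']
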